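/- Let X be a compact metric space, I an uncountable set, and for each α ∈ I let G_α be a non-Abelian group. Then the direct sum ⊕_{α∈I} G_α does not embed into Homeo(X), i.e., there is no injective group homomorphism from ⊕_{α∈I} G_α to the group of homeomorphisms of X. -/

import Mathlib

open Metric Function

variable {X : Type*}

/-- Group structure on the homeomorphism group of `X`, with `(f * g) x = f (g x)`. -/
instance instGroupHomeo [TopologicalSpace X] : Group (X ≃ₜ X) where
  mul f g := g.trans f
  one := Homeomorph.refl X
  inv := Homeomorph.symm
  mul_assoc a b c := Homeomorph.ext fun x => rfl
  one_mul a := Homeomorph.ext fun x => rfl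
  mul_one a := Homeomorph.ext fun x => rfl
  inv_mul_cancel a := Homeomorph.ext fun x => a.symm_apply_apply x

/-- The uniform metric on the homeomorphism group of a metric space. -/
noncomputable def D [MetricSpace X] (φ ψ : X ≃ₜ X) : ℝ := ⨆ x, dist (φ x) (ψ x)
/-- The direct sum of a family of groups, as the subgroup of the product
consisting of finitely supported elements. -/
def directSum (I : Type*) (G : I → Type*) [∀ i, Group (G i)] :
    Subgroup (∀ i, G i) where
  carrier := {f | {i | f i ≠ 1}.Finite}
  one_mem' := by simp
  mul_mem' := by
    intro a b ha hb
    refine (Set.Finite.union ha hb).subset ?_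
    intro i hi
    by_contra h
    simp only [Set.mem_setOf_eq, Set.mem_union, not_or, not_not] at h hi
    exact hi (by show a i * b i = 1; rw [h.1, h.2, one_mul])
  inv_mem' := by
    intro a ha
    refine ha.subset ?_
    intro i hi
    simp only [Set.mem_setOf_eq] at hi ⊢
    intro h
    exact hi (by show (a i)⁻¹ = 1; rw [h, inv_one])

/-!
Give `X ≃ₜ X` the topology induced by `f ↦ (f, f⁻¹)` from the compact-open topology on
`C(X, X) × C(X, X)`. Composition is continuous on `C(X, X)` for compact `X`, so this is a
second countable Hausdorff topological group, and in it each set `{f | ⁅f, v⁆ ≠ 1}` is open.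
Let `u i`, `v i` be the images of a non-commuting pair of the `i`-th factor. Then `u i` lies in
the open set `{f | ⁅f, v i⁆ ≠ 1}`, but `u j` does not for `j ≠ i`, so a basic open set
around `u i` inside it determines `i`: the uncountable `I` would inject into a countable basis.
-/

open scoped commutatorElement
open TopologicalSpace Topology

section CommutatorFamily

variable {ι H : Type*} [Group H] [TopologicalSpace H] [IsTopologicalGroup H]
  [SecondCountableTopology H] [T1Space H]

theorem countable_of_commutator_ne_one {u v : ι → H} (hne : ∀ i, ⁅u i, v i⁆ ≠ 1)
    (hcomm : ∀ i j, j ≠ i → ⁅u j, v i⁆ = 1) : Countable ι := by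
  have hopen (i : ι) : IsOpen {f : H | ⁅f, v i⁆ ≠ 1} := by
    simp_rw [commutatorElement_def]
    exact isOpen_ne_fun (by fun_prop) continuous_const
  choose B hB hmem hsub using fun i ↦
    (isBasis_countableBasis H).exists_subset_of_mem_open (hne i) (hopen i)
  have hinj : Injective fun i ↦ (⟨B i, hB i⟩ : countableBasis H) := by
    intro i j hij
    by_contra hji
    have hBij : B i = B j := congrArg Subtype.val hij
    exact hsub i (hBij ▸ hmem j) (hcomm i j (Ne.symm hji))
  have := (countable_countableBasis H).to_subtype
  exact hinj.countable

end CommutatorFamily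

namespace directSum

variable {I : Type*} {G : I → Type*} [∀ i, Group (G i)] [DecidableEq I]

theorem mulSingle_mem (i : I) (x : G i) : Pi.mulSingle i x ∈ directSum I G :=
  (Set.finite_singleton i).subset fun _ hj ↦ of_not_not fun hji ↦ hj (Pi.mulSingle_eq_of_ne hji x)

def single (i : I) : G i →* directSum I G :=
  (MonoidHom.mulSingle G i).codRestrict _ (mulSingle_mem i)

theorem single_injective (i : I) : Injective (single (G := G) i) :=
  fun _ _ h ↦ Pi.mulSingle_injective i (congrArg Subtype.val h)

theorem commute_single {i j : I} (hij : i ≠ j) (x : G i) (y : G j) :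
    Commute (single i x) (single j y) :=
  Subtype.ext (Pi.mulSingle_commute hij x y)

end directSum

theorem directSum.not_injective_of_uncountable {I : Type*} [Uncountable I] {G : I → Type*}
    [∀ i, Group (G i)] (hG : ∀ i, ∃ a b : G i, a * b ≠ b * a) {H : Type*} [Group H]
    [TopologicalSpace H] [IsTopologicalGroup H] [SecondCountableTopology H] [T1Space H]
    (φ : directSum I G →* H) : ¬ Injective φ := by
  classical
  intro hφ
  choose a b hab using hG
  refine not_countable (α := I) (countable_of_commutator_ne_one
    (u := fun i ↦ φ (single i (a i))) (v := fun i ↦ φ (single i (b i))) (fun i ↦ ?_) ?_)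
  · simp only [← map_commutatorElement]
    exact (map_ne_one_iff (φ.comp (single i)) (hφ.comp (single_injective i))).mpr
      fun h ↦ hab i (commutatorElement_eq_one_iff_commute.mp h)
  · intro i j hji
    simp only [← map_commutatorElement,
      commutatorElement_eq_one_iff_commute.mpr (commute_single hji _ _), map_one]

namespace Homeomorph

variable [TopologicalSpace X]

def toContinuousMapPair (f : X ≃ₜ X) : C(X, X) × C(X, X) := (f, f.symm)

-- Recording `f⁻¹` as well is what makes inversion continuous.
instance : TopologicalSpace (X ≃ₜ X) := .induced toContinuousMapPair inferInstance

theorem isEmbedding_toContinuousMapPair : IsEmbedding (toContinuousMapPair (X := X)) :=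
  ⟨⟨rfl⟩, fun _ _ h ↦ ext fun x ↦ congrArg (fun p ↦ p.1 x) h⟩

instance [LocallyCompactSpace X] : IsTopologicalGroup (X ≃ₜ X) where
  continuous_mul := by
    have hc : Continuous (toContinuousMapPair (X := X)) :=
      isEmbedding_toContinuousMapPair.continuous
    have hcomp := ContinuousMap.continuous_comp' (X := X) (Y := X) (Z := X)
    rw [isEmbedding_toContinuousMapPair.continuous_iff]
    exact (hcomp.comp ((hc.comp continuous_snd).fst.prodMk (hc.comp continuous_fst).fst)).prodMk
      (hcomp.comp ((hc.comp continuous_fst).snd.prodMk (hc.comp continuous_snd).snd))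
  continuous_inv := isEmbedding_toContinuousMapPair.continuous_iff.2 <|
    continuous_swap.comp isEmbedding_toContinuousMapPair.continuous

instance [LocallyCompactSpace X] [SecondCountableTopology X] :
    SecondCountableTopology (X ≃ₜ X) :=
  isEmbedding_toContinuousMapPair.secondCountableTopology

instance [T2Space X] : T2Space (X ≃ₜ X) := isEmbedding_toContinuousMapPair.t2Space

end Homeomorph

theorem stmt_7 [MetricSpace X] [CompactSpace X] {I : Type*} [Uncountable I]
    (G : I → Type*) [∀ i, Group (G i)]
    (hna : ∀ i, ∃ a b : G i, a * b ≠ b * a) :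
    ¬ ∃ φ : directSum I G →* (X ≃ₜ X), Function.Injective φ :=
  fun ⟨φ, hφ⟩ ↦ directSum.not_injective_of_uncountable hna φ hφ
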